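/- arXiv:1101.5820 — 2 statements merged into one kernel-verified Lean document; each statement's English description precedes it below -/
import Mathlib

section
/- Under the assumptions that the strict-order relation is open and every point is in the closure of its strict down-set, for every x ∈ X and every dense subset X₀ of X, the set V^x = {S ∈ 𝒮 : x ∉ S} equals the union over y ∈ X₀ with y < x of the sets V^y = {S ∈ 𝒮 : y ∉ S}. -/
open Set TopologicalSpace

/-- `H` is a lower set with respect to the strict order: `x ∈ H` and `y < x` imply `y ∈ H`. -/
def IsLowerLt {X : Type*} [LT X] (H : Set X) : Prop :=
  ∀ ⦃x⦄, x ∈ H → ∀ ⦃y⦄, y < x → y ∈ H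

/-- The space `𝒮` of topologically closed lower subsets of `X`. -/
def SSpace (X : Type*) [TopologicalSpace X] [LT X] : Type _ :=
  {S : Set X // IsClosed S ∧ IsLowerLt S}

/-- The topology on `𝒮` generated by the sets `V_U = {S : S ∩ U ≠ ∅}` for `U` open and
`V^K = {S : S ∩ K = ∅}` for `K` compact. -/
def STopology (X : Type*) [TopologicalSpace X] [LT X] : TopologicalSpace (SSpace X) :=
  TopologicalSpace.generateFrom
    ({W | ∃ U : Set X, IsOpen U ∧ W = {S : SSpace X | (S.1 ∩ U).Nonempty}} ∪
     {W | ∃ K : Set X, IsCompact K ∧ W = {S : SSpace X | S.1 ∩ K = ∅}})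

theorem isOpen_setOf_lt_of_isOpen_lt {X : Type*} [TopologicalSpace X] [LT X]
    (hR : IsOpen {p : X × X | p.1 < p.2}) (x : X) : IsOpen {y | y < x} :=
  hR.preimage (Continuous.prodMk_left x)

theorem IsOpen.closure_inter_dense {X : Type*} [TopologicalSpace X] {s t : Set X}
    (ht : IsOpen t) (hs : Dense s) : closure (t ∩ s) = closure t :=
  (closure_mono inter_subset_left).antisymm
    (closure_minimal (hs.open_subset_closure_inter ht) isClosed_closure)

/-- The complement of `S` is a neighbourhood of `x`, and `x` is adherent to the open set
`{y | y < x}`, hence to its trace on the dense set `X₀`. -/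
theorem exists_mem_lt_notMem_of_isClosed {X : Type*} [TopologicalSpace X] [LT X]
    (hR : IsOpen {p : X × X | p.1 < p.2}) {X₀ : Set X} (hX₀ : Dense X₀) {x : X}
    (hx : x ∈ closure {y | y < x}) {S : Set X} (hS : IsClosed S) (hxS : x ∉ S) :
    ∃ y ∈ X₀, y < x ∧ y ∉ S := by
  by_contra! h
  have hsub : {y | y < x} ∩ X₀ ⊆ S := fun y ⟨hyx, hy⟩ => h y hy hyx
  rw [← (isOpen_setOf_lt_of_isOpen_lt hR x).closure_inter_dense hX₀] at hx
  exact hxS (hS.closure_subset_iff.2 hsub hx)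

/-- `V^x = ⋃_{y ∈ X₀, y < x} V^y` for any dense `X₀`, assuming the strict order relation
is open and every point lies in the closure of its strict down-set. -/
theorem vx_eq_iUnion (X : Type*) [TopologicalSpace X] [PartialOrder X]
    (hR : IsOpen {p : X × X | p.1 < p.2})
    (hsb : ∀ x : X, x ∈ closure {y | y < x})
    (X₀ : Set X) (hX₀ : Dense X₀) (x : X) :
    {S : SSpace X | x ∉ S.1} = ⋃ y ∈ {y ∈ X₀ | y < x}, {S : SSpace X | y ∉ S.1} := by
  ext S
  simp only [mem_ofPred_eq, mem_iUnion, exists_prop]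
  constructor
  · intro hxS
    obtain ⟨y, hy, hyx, hyS⟩ := exists_mem_lt_notMem_of_isClosed hR hX₀ (hsb x) S.2.1 hxS
    exact ⟨y, ⟨hy, hyx⟩, hyS⟩
  · rintro ⟨y, ⟨-, hyx⟩, hyS⟩ hxS
    exact hyS (S.2.2 hxS hyx)
end

section
/- Under the assumptions that the strict-order relation is open, every point is in the closure of its strict down-set, and X₀ ⊆ X is dense, the Borel σ-algebra of the space 𝒮 of closed lower subsets of X is generated by the countable family of events V^y = {S : y ∉ S}, y ∈ X₀. -/
open Set TopologicalSpace

/-!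
Fix a countable dense `D ⊆ X₀`. If `x ∈ U` with `U` open, some `d ∈ D ∩ U` satisfies `d < z`
for all `z` near `x`, because `x` is a limit of points below it and `<` is open. Hence `V_U` is
the countable union of the events `{S : d ∈ S}`, `d ∈ D ∩ U`, and, by compactness, each
`S ∈ V^K` lies in a finite intersection of events `V^d ⊆ V^K`. So `𝒮` is second countable with
the countable subbasis `V_B` (`B` basic open) and `V^d` (`d ∈ D`), each of which lies in the
σ-algebra generated by the `V^y`, `y ∈ X₀`.
-/

open Filter Topology MeasureTheory

section

variable {X : Type*} [TopologicalSpace X] [LT X]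

theorem exists_mem_inter_eventually_lt (hR : IsOpen {p : X × X | p.1 < p.2})
    (hsb : ∀ x : X, x ∈ closure {y | y < x}) {D : Set X} (hD : Dense D) {O : Set X}
    (hO : IsOpen O) {x : X} (hx : x ∈ O) : ∃ d ∈ D ∩ O, ∀ᶠ z in 𝓝 x, d < z := by
  obtain ⟨y, hyO, hyx⟩ := mem_closure_iff.1 (hsb x) O hO hx
  have hlt : ∀ᶠ d in 𝓝 y, ∀ᶠ z in 𝓝 x, d < z := by
    have h : ∀ᶠ p in 𝓝 y ×ˢ 𝓝 x, p.1 < p.2 := by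
      rw [← nhds_prod_eq]
      exact hR.mem_nhds hyx
    exact h.curry
  have hnear : ∀ᶠ d in 𝓝 y, d ∈ O ∧ ∀ᶠ z in 𝓝 x, d < z :=
    Filter.Eventually.and (hO.mem_nhds hyO) hlt
  obtain ⟨d, hdD, hdO, hd⟩ := ((mem_closure_iff_frequently.1 (hD y)).and_eventually hnear).exists
  exact ⟨d, ⟨hdD, hdO⟩, hd⟩

namespace SSpace

theorem mem_of_lt (S : SSpace X) {x y : X} (hx : x ∈ S.1) (h : y < x) : y ∈ S.1 :=
  S.2.2 hx h

def hitting (U : Set X) : Set (SSpace X) := {S | (S.1 ∩ U).Nonempty}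

def missing (K : Set X) : Set (SSpace X) := {S | S.1 ∩ K = ∅}

theorem missing_singleton (y : X) : missing {y} = {S : SSpace X | y ∉ S.1} := by
  ext S
  simp [missing, inter_singleton_eq_empty]

theorem hitting_sUnion (𝒰 : Set (Set X)) : hitting (⋃₀ 𝒰) = ⋃ U ∈ 𝒰, hitting U := by
  ext S
  simp only [hitting, mem_iUnion₂, exists_prop, mem_ofPred_eq]
  rw [sUnion_eq_biUnion, inter_iUnion₂, nonempty_biUnion]

theorem hitting_eq_biUnion (hR : IsOpen {p : X × X | p.1 < p.2})
    (hsb : ∀ x : X, x ∈ closure {y | y < x}) {D : Set X} (hD : Dense D) {U : Set X}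
    (hU : IsOpen U) : hitting U = ⋃ d ∈ D ∩ U, {S : SSpace X | d ∈ S.1} := by
  ext S
  simp only [hitting, mem_ofPred_eq, mem_iUnion, exists_prop]
  constructor
  · rintro ⟨x, hxS, hxU⟩
    obtain ⟨d, hdDU, hd⟩ := exists_mem_inter_eventually_lt hR hsb hD hU hxU
    exact ⟨d, hdDU, S.mem_of_lt hxS hd.self_of_nhds⟩
  · rintro ⟨d, ⟨-, hdU⟩, hdS⟩
    exact ⟨d, hdS, hdU⟩

theorem exists_finset_biInter_subset_missing (hR : IsOpen {p : X × X | p.1 < p.2})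
    (hsb : ∀ x : X, x ∈ closure {y | y < x}) {D : Set X} (hD : Dense D) {K : Set X}
    (hK : IsCompact K) {S : SSpace X} (hS : S ∈ missing K) :
    ∃ F : Finset X, ↑F ⊆ D ∧ S ∈ ⋂ d ∈ F, {T : SSpace X | d ∉ T.1} ∧
      ⋂ d ∈ F, {T : SSpace X | d ∉ T.1} ⊆ missing K := by
  classical
  have hbelow : ∀ x ∈ K, ∃ d ∈ D ∩ S.1ᶜ, ∀ᶠ z in 𝓝 x, d < z := fun x hx =>
    exists_mem_inter_eventually_lt hR hsb hD S.2.1.isOpen_compl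
      fun hxS => (eq_empty_iff_forall_notMem.1 hS) x ⟨hxS, hx⟩
  choose! d hdD hd using hbelow
  obtain ⟨t, htK, hKt⟩ := hK.elim_nhds_subcover (fun x => {z | d x < z}) hd
  refine ⟨t.image d, ?_, ?_, ?_⟩
  · simpa [subset_def] using fun x hx => (hdD x (htK x hx)).1
  · simpa using fun x hx => (hdD x (htK x hx)).2
  · intro T hT
    rw [missing, mem_ofPred_eq, eq_empty_iff_forall_notMem]
    rintro z ⟨hzT, hzK⟩
    obtain ⟨x, hxt, hxz⟩ := mem_iUnion₂.1 (hKt hzK)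
    exact mem_iInter₂.1 hT (d x) (Finset.mem_image_of_mem d hxt) (T.mem_of_lt hzT hxz)

theorem isOpen_hitting {U : Set X} (hU : IsOpen U) : IsOpen[STopology X] (hitting U) :=
  isOpen_generateFrom_of_mem (Or.inl ⟨U, hU, rfl⟩)

theorem isOpen_setOf_notMem (y : X) : IsOpen[STopology X] {S : SSpace X | y ∉ S.1} := by
  rw [← missing_singleton]
  exact isOpen_generateFrom_of_mem (Or.inr ⟨{y}, isCompact_singleton, rfl⟩)

theorem sTopology_eq_generateFrom (hR : IsOpen {p : X × X | p.1 < p.2})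
    (hsb : ∀ x : X, x ∈ closure {y | y < x}) {D : Set X} (hD : Dense D) {b : Set (Set X)}
    (hb : IsTopologicalBasis b) :
    STopology X = generateFrom (hitting '' b ∪ (fun d => {S : SSpace X | d ∉ S.1}) '' D) := by
  set C := hitting '' b ∪ (fun d => {S : SSpace X | d ∉ S.1}) '' D
  refine le_antisymm (le_generateFrom ?_) (le_generateFrom ?_)
  · rintro _ (⟨B, hB, rfl⟩ | ⟨d, -, rfl⟩)
    exacts [isOpen_hitting (hb.isOpen hB), isOpen_setOf_notMem d]
  · let _ := generateFrom C
    rintro _ (⟨U, hU, rfl⟩ | ⟨K, hK, rfl⟩)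
    · obtain ⟨𝒰, h𝒰b, rfl⟩ := hb.open_eq_sUnion hU
      change IsOpen (hitting (⋃₀ 𝒰))
      rw [hitting_sUnion]
      exact isOpen_biUnion fun B hB => isOpen_generateFrom_of_mem (Or.inl ⟨B, h𝒰b hB, rfl⟩)
    · refine isOpen_iff_forall_mem_open.2 fun S hS => ?_
      obtain ⟨F, hFD, hSF, hFK⟩ := exists_finset_biInter_subset_missing hR hsb hD hK hS
      refine ⟨_, hFK, isOpen_biInter_finset fun d hd => ?_, hSF⟩
      exact isOpen_generateFrom_of_mem (Or.inr ⟨d, hFD hd, rfl⟩)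

end SSpace

end

open SSpace in
/-- Under the standing assumptions, the Borel σ-algebra of the space of closed lower
subsets of `X` is generated by the events `V^y = {S : y ∉ S}` for `y` in a dense `X₀`. -/
theorem sspace_borel_generated
    (X : Type*) [TopologicalSpace X] [SecondCountableTopology X] [PartialOrder X]
    (hR : IsOpen {p : X × X | p.1 < p.2})
    (hsb : ∀ x : X, x ∈ closure {y | y < x})
    (X₀ : Set X) (hX₀ : Dense X₀) :
    @borel (SSpace X) (STopology X) =
      MeasurableSpace.generateFrom {A : Set (SSpace X) | ∃ y ∈ X₀, A = {S | y ∉ S.1}} := by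
  obtain ⟨b, hbc, -, hb⟩ := exists_countable_basis X
  obtain ⟨D, hDX₀, hDc, hD⟩ := hX₀.exists_countable_dense_subset
  set M := MeasurableSpace.generateFrom {A : Set (SSpace X) | ∃ y ∈ X₀, A = {S | y ∉ S.1}}
  have hC := sTopology_eq_generateFrom hR hsb hD hb
  let _ := STopology X
  have : SecondCountableTopology (SSpace X) := ⟨⟨_, (hbc.image _).union (hDc.image _), hC⟩⟩
  have hnotMem : ∀ y ∈ X₀, MeasurableSet[M] {S : SSpace X | y ∉ S.1} := fun y hy =>
    MeasurableSpace.measurableSet_generateFrom ⟨y, hy, rfl⟩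
  refine le_antisymm ?_ (MeasurableSpace.generateFrom_le ?_)
  · rw [borel_eq_generateFrom_of_subbasis hC]
    refine MeasurableSpace.generateFrom_le ?_
    rintro _ (⟨B, hB, rfl⟩ | ⟨d, hd, rfl⟩)
    · rw [hitting_eq_biUnion hR hsb hD (hb.isOpen hB)]
      exact .biUnion (hDc.mono inter_subset_left) fun d hd => (hnotMem d (hDX₀ hd.1)).of_compl
    · exact hnotMem d (hDX₀ hd)
  · rintro _ ⟨y, -, rfl⟩
    exact MeasurableSpace.measurableSet_generateFrom (isOpen_setOf_notMem y)
end
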